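/- Consider the block system M = [[A_a, Σ, Σ, 0], [−Σᵀ, K, 0, 0], [−Σᵀ, 0, K, −Σᵀ], [0, 0, Σ, 0]] where A_a is symmetric positive definite, K is symmetric positive definite, and Σ has full rank in the appropriate sense (the (4,3) block Σ is surjective). If the upper-left 3×3 block system (acting on (p_a, λ_{aa}, λ_{ab})) is invertible with a coercive symmetric part, then M is invertible. -/

import Mathlib

open Matrix

/-!
Pair the equation `M w = 0`, `w = (p, λ_aa, λ_ab, μ)`, with `w` itself. Every coupling block
occurs once as `Σ` and once as `-Σᵀ`, so its contributions cancel and only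
`p ⬝ A_a p + λ_aa ⬝ K λ_aa + λ_ab ⬝ K λ_ab` survives; it vanishes, hence so do `p`, `λ_aa`,
`λ_ab`. The third row then reads `Σ₂ᵀ μ = 0`, and `Σ₂ᵀ` is injective because `Σ₂` is onto.
-/

namespace Matrix

theorem fromBlocks_fromCols_fromRows_eq_submatrix_sumAssoc {ι₁ ι₂ ι₃ α : Type*} [Zero α]
    (P : Matrix ι₁ ι₁ α) (Q : Matrix ι₁ ι₂ α) (R : Matrix ι₂ ι₁ α) (D : Matrix ι₂ ι₂ α)
    (F : Matrix ι₂ ι₃ α) (G : Matrix ι₃ ι₂ α) :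
    fromBlocks P (fromCols Q 0) (fromRows R 0) (fromBlocks D F G 0) =
      (fromBlocks (fromBlocks P Q R D) (fromRows 0 F) (fromCols 0 G) 0).submatrix
        (Equiv.sumAssoc ι₁ ι₂ ι₃).symm (Equiv.sumAssoc ι₁ ι₂ ι₃).symm := by
  ext (i | i | i) (j | j | j) <;> rfl

variable {ι κ : Type*} [Fintype ι] [Fintype κ]

theorem isUnit_of_mulVec_eq_zero {K : Type*} [Field K] [DecidableEq ι] {A : Matrix ι ι K}
    (hA : ∀ v, A *ᵥ v = 0 → v = 0) : IsUnit A :=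
  mulVec_injective_iff_isUnit.1 fun x y hxy =>
    sub_eq_zero.1 <| hA _ <| by rw [mulVec_sub, hxy, sub_self]

theorem dotProduct_fromBlocks_skew_mulVec {R : Type*} [CommRing R] (A : Matrix ι ι R)
    (B : Matrix ι κ R) (D : Matrix κ κ R) (u : ι → R) (v : κ → R) :
    Sum.elim u v ⬝ᵥ (fromBlocks A B (-Bᵀ) D *ᵥ Sum.elim u v) =
      u ⬝ᵥ (A *ᵥ u) + v ⬝ᵥ (D *ᵥ v) := by
  rw [fromBlocks_mulVec, Sum.elim_comp_inl, Sum.elim_comp_inr, sumElim_dotProduct_sumElim,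
    dotProduct_add, dotProduct_add, neg_mulVec, dotProduct_neg, dotProduct_transpose_mulVec]
  ring

theorem dotProduct_mulVec_nonneg_of_pos {R : Type*} [Semiring R] [PartialOrder R]
    {A : Matrix ι ι R} (hA : ∀ u, u ≠ 0 → 0 < u ⬝ᵥ (A *ᵥ u)) (u : ι → R) :
    0 ≤ u ⬝ᵥ (A *ᵥ u) := by
  rcases eq_or_ne u 0 with rfl | hu
  · rw [zero_dotProduct]
  · exact (hA u hu).le

variable {R : Type*} [Field R] [LinearOrder R] [IsStrictOrderedRing R]

theorem dotProduct_fromBlocks_skew_mulVec_pos {A : Matrix ι ι R} (B : Matrix ι κ R)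
    {D : Matrix κ κ R} (hA : ∀ u, u ≠ 0 → 0 < u ⬝ᵥ (A *ᵥ u))
    (hD : ∀ v, v ≠ 0 → 0 < v ⬝ᵥ (D *ᵥ v)) :
    ∀ x, x ≠ 0 → 0 < x ⬝ᵥ (fromBlocks A B (-Bᵀ) D *ᵥ x) := by
  intro x hx
  rw [← Sum.elim_comp_inl_inr x] at hx ⊢
  rw [dotProduct_fromBlocks_skew_mulVec]
  rcases eq_or_ne (x ∘ Sum.inl) 0 with hu | hu
  · have hv : x ∘ Sum.inr ≠ 0 := fun hv => hx <| by rw [hu, hv, Sum.elim_zero_zero]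
    exact add_pos_of_nonneg_of_pos (dotProduct_mulVec_nonneg_of_pos hA _) (hD _ hv)
  · exact add_pos_of_pos_of_nonneg (hA _ hu) (dotProduct_mulVec_nonneg_of_pos hD _)

theorem eq_zero_of_transpose_mulVec_eq_zero {E : Matrix κ ι R}
    (hE : Function.Surjective E.mulVec) {μ : κ → R} (hμ : Eᵀ *ᵥ μ = 0) : μ = 0 := by
  obtain ⟨y, rfl⟩ := hE μ
  rw [← dotProduct_self_eq_zero, ← dotProduct_transpose_mulVec, hμ, dotProduct_zero]

theorem isUnit_fromBlocks_neg_transpose_zero [DecidableEq ι] [DecidableEq κ]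
    {N : Matrix ι ι R} {E : Matrix κ ι R} (hN : ∀ x, x ≠ 0 → 0 < x ⬝ᵥ (N *ᵥ x))
    (hE : Function.Surjective E.mulVec) :
    IsUnit (fromBlocks N (-Eᵀ) E 0) := by
  refine isUnit_of_mulVec_eq_zero fun w hw => ?_
  rw [← Sum.elim_comp_inl_inr w] at hw ⊢
  set x := w ∘ Sum.inl
  set μ := w ∘ Sum.inr
  rw [fromBlocks_mulVec, Sum.elim_comp_inl, Sum.elim_comp_inr, zero_mulVec, add_zero,
    ← Sum.elim_zero_zero, Sum.elim_eq_iff, neg_mulVec, ← sub_eq_add_neg, sub_eq_zero] at hw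
  obtain ⟨hNx, hEx⟩ := hw
  have hx : x = 0 := by
    by_contra hx
    have hpos := hN x hx
    rw [hNx, dotProduct_transpose_mulVec, hEx, dotProduct_zero] at hpos
    exact hpos.false
  have hμ : μ = 0 := eq_zero_of_transpose_mulVec_eq_zero hE <| by rw [← hNx, hx, mulVec_zero]
  rw [hx, hμ, Sum.elim_zero_zero]

end Matrix

theorem stmt7_general {n m k : ℕ} (Aa : Matrix (Fin n) (Fin n) ℝ) (S1 : Matrix (Fin n) (Fin m) ℝ)
    (K : Matrix (Fin m) (Fin m) ℝ) (S2 : Matrix (Fin k) (Fin m) ℝ)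
    (hApd : ∀ x : Fin n → ℝ, x ≠ 0 → 0 < x ⬝ᵥ (Aa *ᵥ x))
    (hKpd : ∀ x : Fin m → ℝ, x ≠ 0 → 0 < x ⬝ᵥ (K *ᵥ x))
    (hS2 : ∀ y : Fin k → ℝ, ∃ x : Fin m → ℝ, S2 *ᵥ x = y) :
    IsUnit (Matrix.fromBlocks (Matrix.fromBlocks Aa S1 (-S1ᵀ) K)
      (Matrix.fromBlocks S1 0 0 0)
      (Matrix.fromBlocks (-S1ᵀ) 0 0 0)
      (Matrix.fromBlocks K (-S2ᵀ) S2 0)) := by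
  have hT := dotProduct_fromBlocks_skew_mulVec_pos (fromRows S1 (0 : Matrix (Fin m) (Fin m) ℝ))
    (dotProduct_fromBlocks_skew_mulVec_pos S1 hApd hKpd) hKpd
  have hE : Function.Surjective (fromCols (0 : Matrix (Fin k) (Fin n ⊕ Fin m) ℝ) S2).mulVec :=
    fun y => (hS2 y).elim fun x hx =>
      ⟨Sum.elim 0 x, by rw [fromCols_mulVec_sumElim, zero_mulVec, zero_add, hx]⟩
  have h12 : fromBlocks S1 0 0 (0 : Matrix (Fin m) (Fin k) ℝ) = fromCols (fromRows S1 0) 0 := by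
    ext (i | i) (j | j) <;> rfl
  have h21 : fromBlocks (-S1ᵀ) 0 0 (0 : Matrix (Fin k) (Fin m) ℝ) =
      fromRows (fromCols (-S1ᵀ) 0) 0 := by
    ext (i | i) (j | j) <;> rfl
  -- regroup `M` as the saddle-point matrix `[[T, -Eᵀ], [E, 0]]` with `E = [0 S2]`
  rw [h12, h21, fromBlocks_fromCols_fromRows_eq_submatrix_sumAssoc, isUnit_submatrix_equiv]
  simpa only [transpose_fromCols, transpose_fromRows, fromRows_neg, fromCols_neg, transpose_zero,
    neg_zero] using isUnit_fromBlocks_neg_transpose_zero hT hE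

/-- The 4×4 block system
`M = [[A_a, Σ, Σ, 0], [−Σᵀ, K, 0, 0], [−Σᵀ, 0, K, −Σ₂ᵀ], [0, 0, Σ₂, 0]]`
with `A_a` symmetric positive definite, `K` symmetric positive definite, the (4,3) block
`Σ₂` surjective, and the upper-left 3×3 block invertible with coercive symmetric part,
is invertible. -/
theorem stmt7 {n m k : ℕ} (Aa : Matrix (Fin n) (Fin n) ℝ) (S1 : Matrix (Fin n) (Fin m) ℝ)
    (K : Matrix (Fin m) (Fin m) ℝ) (S2 : Matrix (Fin k) (Fin m) ℝ) (α : ℝ) (hα : 0 < α)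
    (hAsym : Aaᵀ = Aa) (hApd : ∀ x : Fin n → ℝ, x ≠ 0 → 0 < x ⬝ᵥ (Aa *ᵥ x))
    (hKsym : Kᵀ = K) (hKpd : ∀ x : Fin m → ℝ, x ≠ 0 → 0 < x ⬝ᵥ (K *ᵥ x))
    (hS2 : ∀ y : Fin k → ℝ, ∃ x : Fin m → ℝ, S2 *ᵥ x = y)
    (hTunit : IsUnit (Matrix.fromBlocks (Matrix.fromBlocks Aa S1 (-S1ᵀ) K)
      (Matrix.fromRows S1 (0 : Matrix (Fin m) (Fin m) ℝ))
      (Matrix.fromCols (-S1ᵀ) (0 : Matrix (Fin m) (Fin m) ℝ)) K))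
    (hTcoer : ∀ x : (Fin n ⊕ Fin m) ⊕ Fin m → ℝ,
      α * (x ⬝ᵥ x) ≤ x ⬝ᵥ ((Matrix.fromBlocks (Matrix.fromBlocks Aa S1 (-S1ᵀ) K)
        (Matrix.fromRows S1 (0 : Matrix (Fin m) (Fin m) ℝ))
        (Matrix.fromCols (-S1ᵀ) (0 : Matrix (Fin m) (Fin m) ℝ)) K) *ᵥ x)) :
    IsUnit (Matrix.fromBlocks (Matrix.fromBlocks Aa S1 (-S1ᵀ) K)
      (Matrix.fromBlocks S1 0 0 0)
      (Matrix.fromBlocks (-S1ᵀ) 0 0 0)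
      (Matrix.fromBlocks K (-S2ᵀ) S2 0)) :=
  stmt7_general Aa S1 K S2 hApd hKpd hS2
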